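/- Assume κ^{<κ} = κ. The relation E_0^{<κ} on 2^κ (equivalence modulo bounded sets, i.e. η E ξ iff there is α < κ with η(β) = ξ(β) for all β > α) is not Borel reducible to the identity relation on 2^κ: there is no Borel function f : 2^κ → 2^κ with η E_0^{<κ} ξ ⟺ f(η) = f(ξ). -/

import Mathlib

open Set

universe u

namespace GDST

def KS (I : Type u) : Type u := I → I
def CS (I : Type u) : Type u := I → Bool

def kBasic {I : Type u} [LT I] (ζ : I → I) (β : I) : Set (KS I) :=
  {η : KS I | ∀ α : I, α < β → η α = ζ α}

def cBasic {I : Type u} [LT I] (ζ : I → Bool) (β : I) : Set (CS I) :=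
  {η : CS I | ∀ α : I, α < β → η α = ζ α}

instance kTop {I : Type u} [LT I] : TopologicalSpace (KS I) :=
  TopologicalSpace.generateFrom {U | ∃ ζ β, U = kBasic ζ β}

instance cTop {I : Type u} [LT I] : TopologicalSpace (CS I) :=
  TopologicalSpace.generateFrom {U | ∃ ζ β, U = cBasic ζ β}
/-- κ-Borel subsets of `2^κ`: smallest family containing the basic open sets and closed
under complements and intersections of size `≤ κ` (indexed by `I`, of cardinality `κ`). -/
inductive IsCBorel {I : Type u} [LT I] : Set (CS I) → Prop
  | basic (ζ : I → Bool) (β : I) : IsCBorel (cBasic ζ β)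
  | compl {s : Set (CS I)} : IsCBorel s → IsCBorel sᶜ
  | iInter {s : I → Set (CS I)} : (∀ i, IsCBorel (s i)) → IsCBorel (⋂ i, s i)

/-!
A κ-analogue of the classical proof that `E₀` is not smooth. Call a set comeager if it contains
an intersection of `κ` dense open sets. Every intersection of fewer than `κ` cylinders forming a
chain contains a cylinder, so a transfinite fusion argument gives the Baire category theorem:
comeager sets meet every cylinder. κ-Borel sets have the Baire property, and a set with the Baire
property that is invariant under bounded modifications is meager or comeager, because flipping
the bits below a bound is a homeomorphism carrying any cylinder of that radius onto any other.
So every coordinate of a Borel reduction `f` is constant on a comeager set, hence so is `f`; but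
every `E₀`-class is meager, and a comeager set meets two inequivalent points.
-/

open Filter Topology TopologicalSpace Cardinal

section Comeager

variable {ι X : Type*} [TopologicalSpace X]

variable (ι X) in
def comeager : Filter X where
  sets := {s | ∃ D : ι → Set X, (∀ i, IsOpen (D i)) ∧ (∀ i, Dense (D i)) ∧ ⋂ i, D i ⊆ s}
  univ_sets := ⟨fun _ => univ, fun _ => isOpen_univ, fun _ => dense_univ, subset_univ _⟩
  sets_of_superset := fun ⟨D, hDo, hDd, hD⟩ hst => ⟨D, hDo, hDd, hD.trans hst⟩
  inter_sets := fun ⟨D, hDo, hDd, hD⟩ ⟨E, hEo, hEd, hE⟩ =>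
    ⟨fun i => D i ∩ E i, fun i => (hDo i).inter (hEo i),
      fun i => (hDd i).inter_of_isOpen_left (hEd i) (hDo i),
      (iInter_inter_distrib D E).subset.trans (inter_subset_inter hD hE)⟩

theorem mem_comeager_of_isOpen_of_dense [Nonempty ι] {s : Set X} (hso : IsOpen s)
    (hsd : Dense s) : s ∈ comeager ι X :=
  ⟨fun _ => s, fun _ => hso, fun _ => hsd, iInter_subset _ (Classical.arbitrary ι)⟩

theorem eventually_all_comeager [Infinite ι] {p : ι → X → Prop}
    (hp : ∀ i, ∀ᶠ x in comeager ι X, p i x) : ∀ᶠ x in comeager ι X, ∀ i, p i x := by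
  choose D hDo hDd hD using hp
  obtain ⟨e⟩ : Nonempty (ι ≃ ι × ι) :=
    Cardinal.eq.1 (by rw [mk_prod, lift_id, mul_eq_self (aleph0_le_mk ι)])
  refine ⟨fun k => D (e k).1 (e k).2, fun k => hDo _ _, fun k => hDd _ _, fun x hx i => ?_⟩
  refine hD i (mem_iInter.2 fun j => ?_)
  simpa using mem_iInter.1 hx (e.symm (i, j))

theorem tendsto_comeager_homeomorph {Y : Type*} [TopologicalSpace Y] (h : X ≃ₜ Y) :
    Tendsto h (comeager ι X) (comeager ι Y) := by
  rintro s ⟨D, hDo, hDd, hD⟩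
  exact ⟨fun i => h ⁻¹' D i, fun i => (hDo i).preimage h.continuous,
    fun i => (hDd i).preimage h.isOpenMap,
    fun x hx => hD (mem_iInter.2 fun i => mem_iInter.1 hx i)⟩

variable (ι) in
def HasBaireProperty (A : Set X) : Prop :=
  ∃ U, IsOpen U ∧ A =ᶠ[comeager ι X] U

theorem IsOpen.hasBaireProperty {U : Set X} (hU : IsOpen U) : HasBaireProperty ι U :=
  ⟨U, hU, EventuallyEq.rfl⟩

theorem closure_eventuallyEq_comeager [Nonempty ι] {U : Set X} (hU : IsOpen U) :
    closure U =ᶠ[comeager ι X] U := by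
  rw [eventuallyEq_set]
  filter_upwards [mem_comeager_of_isOpen_of_dense hU.isLocallyClosed.isOpen_coborder
    dense_coborder] with x hx
  nth_rewrite 2 [← closure_inter_coborder (s := U)]
  simp [hx]

theorem HasBaireProperty.compl [Nonempty ι] {A : Set X} (hA : HasBaireProperty ι A) :
    HasBaireProperty ι Aᶜ := by
  obtain ⟨U, hU, hAU⟩ := hA
  exact ⟨(closure U)ᶜ, isClosed_closure.isOpen_compl,
    hAU.compl.trans (closure_eventuallyEq_comeager hU).compl.symm⟩

theorem HasBaireProperty.iUnion [Infinite ι] {A : ι → Set X}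
    (hA : ∀ i, HasBaireProperty ι (A i)) : HasBaireProperty ι (⋃ i, A i) := by
  choose U hU hAU using hA
  refine ⟨⋃ i, U i, isOpen_iUnion hU, eventuallyEq_set.2 ?_⟩
  filter_upwards [eventually_all_comeager fun i => (hAU i).mem_iff] with x hx
  simp only [mem_iUnion, hx]

theorem HasBaireProperty.iInter [Infinite ι] {A : ι → Set X}
    (hA : ∀ i, HasBaireProperty ι (A i)) : HasBaireProperty ι (⋂ i, A i) := by
  simpa [compl_iUnion] using (HasBaireProperty.iUnion fun i => (hA i).compl).compl

end Comeager

section Cylinders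

variable {I : Type*} [LT I]

theorem isOpen_cBasic (ζ : CS I) (β : I) : IsOpen (cBasic ζ β) :=
  isOpen_generateFrom_of_mem ⟨ζ, β, rfl⟩

theorem mem_cBasic_self (x : CS I) (β : I) : x ∈ cBasic x β := fun _ _ => rfl

theorem IsCBorel.hasBaireProperty [Infinite I] {A : Set (CS I)}
    (hA : IsCBorel A) : HasBaireProperty I A := by
  induction hA with
  | basic ζ β => exact IsOpen.hasBaireProperty (isOpen_cBasic ζ β)
  | compl _ ih => exact ih.compl
  | iInter _ ih => exact HasBaireProperty.iInter ih

end Cylinders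

section LinearCylinders

variable {I : Type*} [LinearOrder I]

theorem cBasic_subset_of_mem {x ζ : CS I} {β γ : I} (hx : x ∈ cBasic ζ β) (hβγ : β ≤ γ) :
    cBasic x γ ⊆ cBasic ζ β := fun _ hy α hα =>
  (hy α (hα.trans_le hβγ)).trans (hx α hα)

theorem isTopologicalBasis_cBasic [Nonempty I] :
    IsTopologicalBasis {U : Set (CS I) | ∃ ζ β, U = cBasic ζ β} := by
  refine ⟨?_, ?_, rfl⟩
  · rintro _ ⟨ζ₁, β₁, rfl⟩ _ ⟨ζ₂, β₂, rfl⟩ x ⟨hx₁, hx₂⟩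
    exact ⟨cBasic x (max β₁ β₂), ⟨x, _, rfl⟩, mem_cBasic_self x _,
      subset_inter (cBasic_subset_of_mem hx₁ (le_max_left _ _))
        (cBasic_subset_of_mem hx₂ (le_max_right _ _))⟩
  · exact eq_univ_of_forall fun x =>
      ⟨cBasic x (Classical.arbitrary I), ⟨x, _, rfl⟩, mem_cBasic_self x _⟩

theorem exists_cBasic_subset [Nonempty I] {U : Set (CS I)} (hU : IsOpen U) {x : CS I}
    (hx : x ∈ U) : ∃ β, cBasic x β ⊆ U := by
  obtain ⟨_, ⟨ζ, β, rfl⟩, hxt, htU⟩ := isTopologicalBasis_cBasic.isOpen_iff.1 hU x hx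
  exact ⟨β, (cBasic_subset_of_mem hxt le_rfl).trans htU⟩

theorem isOpen_setOf_apply [NoMaxOrder I] (β : I) (p : Bool → Prop) :
    IsOpen {x : CS I | p (x β)} := by
  refine isOpen_iff_forall_mem_open.2 fun x hx => ?_
  obtain ⟨γ, hβγ⟩ := exists_gt β
  exact ⟨cBasic x γ, fun y hy => show p (y β) by rwa [hy β hβγ], isOpen_cBasic x γ,
    mem_cBasic_self x γ⟩

end LinearCylinders

section Flip

variable {I : Type*}

def xorWith (d x : CS I) : CS I := fun α => x α ^^ d α

theorem xorWith_involutive (d : CS I) : Function.Involutive (xorWith d) := fun x =>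
  funext fun α => by simp [xorWith]

variable [LT I]

theorem xorWith_preimage_cBasic (d ζ : CS I) (β : I) :
    xorWith d ⁻¹' cBasic ζ β = cBasic (xorWith d ζ) β := by
  ext x
  refine forall₂_congr fun α _ => ?_
  simp only [xorWith]
  cases x α <;> cases d α <;> cases ζ α <;> decide

theorem continuous_xorWith (d : CS I) : Continuous (xorWith d) :=
  continuous_generateFrom_iff.2 fun _ ⟨ζ, β, h⟩ =>
    h ▸ (xorWith_preimage_cBasic d ζ β).symm ▸ isOpen_cBasic _ β

def xorHomeomorph (d : CS I) : CS I ≃ₜ CS I :=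
  { (xorWith_involutive d).toPerm with
    continuous_toFun := continuous_xorWith d
    continuous_invFun := continuous_xorWith d }

end Flip

def SegmentsBounded (I : Type*) [Preorder I] : Prop :=
  ∀ i : I, ∀ g : Iio i → I, BddAbove (range g)

section Baire

variable {I : Type*} [LinearOrder I]

def cyl (p : CS I × I) : Set (CS I) := cBasic p.1 p.2

open scoped Classical in
noncomputable def glue {ι : Type*} (q : ι → CS I × I) : CS I :=
  fun α => if h : ∃ a, α < (q a).2 then (q h.choose).1 α else false

theorem glue_mem_cyl {ι : Type*} {q : ι → CS I × I}
    (hq : IsChain (· ⊆ ·) (range fun a => cyl (q a))) (a : ι) : glue q ∈ cyl (q a) := by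
  intro α hα
  have h : ∃ a, α < (q a).2 := ⟨a, hα⟩
  simp only [glue, dif_pos h]
  rcases hq.total ⟨h.choose, rfl⟩ ⟨a, rfl⟩ with hsub | hsub
  · exact hsub (mem_cBasic_self _ _) α hα
  · exact (hsub (mem_cBasic_self _ _) α h.choose_spec).symm

theorem cBasic_glue_subset {ι : Type*} {q : ι → CS I × I}
    (hq : IsChain (· ⊆ ·) (range fun a => cyl (q a))) {b : I} (hb : ∀ a, (q a).2 ≤ b) (a : ι) :
    cBasic (glue q) b ⊆ cyl (q a) :=
  cBasic_subset_of_mem (glue_mem_cyl hq a) (hb a)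

theorem exists_cyl_subset_inter [Nonempty I] {D : Set (CS I)} (hDo : IsOpen D) (hDd : Dense D)
    (p : CS I × I) : ∃ p', cyl p' ⊆ D ∩ cyl p := by
  obtain ⟨x, hxp, hxD⟩ := hDd.inter_open_nonempty (cyl p) (isOpen_cBasic _ _)
    ⟨p.1, mem_cBasic_self _ _⟩
  obtain ⟨β, hβ⟩ := exists_cBasic_subset (hDo.inter (isOpen_cBasic p.1 p.2)) ⟨hxD, hxp⟩
  exact ⟨(x, β), hβ⟩

def withBase {i : I} (p₀ : CS I × I) (prev : ∀ j < i, CS I × I) :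
    WithBot (Iio i) → CS I × I :=
  WithBot.recBotCoe p₀ fun j => prev j j.2

variable [WellFoundedLT I]

/-- Stage `i` shrinks the cylinder around the glue of `p₀` and the earlier stages, whose radius
bounds all of theirs; in the application `shrink i p` is a cylinder inside `D i ∩ cyl p`. -/
noncomputable def fusion (shrink : I → CS I × I → CS I × I)
    (bound : ∀ i : I, (Iio i → I) → I) (p₀ : CS I × I) : I → CS I × I :=
  wellFounded_lt.fix fun i prev =>
    shrink i (glue (withBase p₀ prev), max p₀.2 (bound i fun j => (prev j j.2).2))

theorem fusion_eq (shrink : I → CS I × I → CS I × I) (bound : ∀ i : I, (Iio i → I) → I)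
    (p₀ : CS I × I) (i : I) :
    fusion shrink bound p₀ i = shrink i (glue (withBase p₀ fun j (_ : j < i) =>
      fusion shrink bound p₀ j), max p₀.2 (bound i fun j => fusion shrink bound p₀ j |>.2)) :=
  WellFounded.fix_eq _ _ _

theorem cyl_fusion_subset {shrink : I → CS I × I → CS I × I} {bound : ∀ i : I, (Iio i → I) → I}
    (hshrink : ∀ i p, cyl (shrink i p) ⊆ cyl p) (hbound : ∀ i g, bound i g ∈ upperBounds (range g))
    (p₀ : CS I × I) (i : I) (o : WithBot (Iio i)) :
    cyl (fusion shrink bound p₀ i) ⊆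
      cyl (withBase p₀ (fun j (_ : j < i) => fusion shrink bound p₀ j) o) := by
  set F := fusion shrink bound p₀
  induction i using WellFoundedLT.induction with
  | _ i IH =>
  have hanti : Antitone fun o => cyl (withBase p₀ (fun j (_ : j < i) => F j) o) := by
    intro a b hab
    induction b using WithBot.recBotCoe with
    | bot => rw [le_bot_iff.1 hab]
    | coe j =>
      induction a using WithBot.recBotCoe with
      | bot => exact IH j j.2 ⊥
      | coe k =>
        rcases (WithBot.coe_le_coe.1 hab).lt_or_eq with h | rfl
        · exact IH j j.2 ↑(⟨k, h⟩ : Iio j.1)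
        · exact le_rfl
  rw [show F i = _ from fusion_eq shrink bound p₀ i]
  refine (hshrink i _).trans (cBasic_glue_subset hanti.isChain_range (fun o' => ?_) o)
  induction o' using WithBot.recBotCoe with
  | bot => exact le_max_left _ _
  | coe j => exact (hbound i (fun j => (F j).2) ⟨j, rfl⟩).trans (le_max_right _ _)

theorem exists_mem_cBasic_forall_mem [Nonempty I]
    (hbdd : SegmentsBounded I) {D : I → Set (CS I)}
    (hDo : ∀ i, IsOpen (D i)) (hDd : ∀ i, Dense (D i)) (ζ : CS I) (β : I) :
    ∃ x ∈ cBasic ζ β, ∀ i, x ∈ D i := by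
  choose shrink hshrink using fun i => exists_cyl_subset_inter (hDo i) (hDd i)
  choose bound hbound using hbdd
  set F := fusion shrink bound (ζ, β)
  have hsub := cyl_fusion_subset (fun i p => (hshrink i p).trans inter_subset_right) hbound (ζ, β)
  have hD (i : I) : cyl (F i) ⊆ D i := by
    rw [show F i = _ from fusion_eq shrink bound (ζ, β) i]
    exact (hshrink i _).trans inter_subset_left
  have hanti : Antitone fun i => cyl (F i) := fun j i hji =>
    hji.lt_or_eq.elim (fun h => hsub i ↑(⟨j, h⟩ : Iio i)) fun h => h ▸ le_rfl
  have hglue := glue_mem_cyl hanti.isChain_range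
  exact ⟨glue F, hsub (Classical.arbitrary I) ⊥ (hglue _), fun i => hD i (hglue i)⟩

theorem frequently_mem_cBasic [Nonempty I] (hbdd : SegmentsBounded I)
    (ζ : CS I) (β : I) : ∃ᶠ x in comeager I (CS I), x ∈ cBasic ζ β := by
  rintro ⟨D, hDo, hDd, hD⟩
  obtain ⟨x, hx, hxD⟩ := exists_mem_cBasic_forall_mem hbdd hDo hDd ζ β
  exact hD (mem_iInter.2 hxD) hx

theorem comeager_neBot [Nonempty I] (hbdd : SegmentsBounded I) :
    (comeager I (CS I)).NeBot :=
  (frequently_true_iff_neBot _).1 <|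
    (frequently_mem_cBasic hbdd (fun _ => false) (Classical.arbitrary I)).mono fun _ _ => trivial

end Baire

section E0

variable {I : Type*} [LinearOrder I]

def E0 (η ξ : CS I) : Prop := ∃ α, ∀ β, α < β → η β = ξ β

theorem eventually_not_E0 [Nonempty I] [NoMaxOrder I] (η : CS I) :
    ∀ᶠ ξ in comeager I (CS I), ¬ E0 ξ η := by
  refine ⟨fun α => ⋃ β > α, {ξ | ξ β ≠ η β},
    fun α => isOpen_biUnion fun β _ => isOpen_setOf_apply β (· ≠ η β), fun α => ?_, ?_⟩
  · refine isTopologicalBasis_cBasic.dense_iff.2 ?_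
    rintro _ ⟨ζ, γ, rfl⟩ -
    obtain ⟨δ, hδ⟩ := exists_gt (max α γ)
    refine ⟨Function.update ζ δ (!η δ), fun β hβ => Function.update_of_ne ?_ _ _, ?_⟩
    · exact (hβ.trans ((le_max_right α γ).trans_lt hδ)).ne
    · exact mem_biUnion ((le_max_left α γ).trans_lt hδ) (show _ ≠ _ by simp)
  · rintro ξ hξ ⟨α, hα⟩
    obtain ⟨β, hαβ, hne⟩ := mem_iUnion₂.1 (mem_iInter.1 hξ α)
    exact hne (hα β hαβ)

theorem mem_comeager_or_compl_mem_comeager [Nonempty I] [WellFoundedLT I]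
    (hbdd : SegmentsBounded I) {A : Set (CS I)} (hA : HasBaireProperty I A)
    (hinv : ∀ x y, E0 x y → x ∈ A → y ∈ A) :
    A ∈ comeager I (CS I) ∨ Aᶜ ∈ comeager I (CS I) := by
  obtain ⟨V, hV, hAV⟩ := hA.compl
  obtain ⟨U, hU, hAU⟩ := hA
  rcases U.eq_empty_or_nonempty with rfl | ⟨x, hx⟩
  · exact Or.inr (eventuallyEq_empty.1 hAU)
  rcases V.eq_empty_or_nonempty with rfl | ⟨y, hy⟩
  · exact Or.inl ((eventuallyEq_empty.1 hAV).mono fun _ => not_not.1)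
  obtain ⟨β, hβ⟩ := exists_cBasic_subset hU hx
  obtain ⟨β', hβ'⟩ := exists_cBasic_subset hV hy
  set γ := max β β'
  have hxU : cBasic x γ ⊆ U :=
    (cBasic_subset_of_mem (mem_cBasic_self x β) (le_max_left _ _)).trans hβ
  have hyV : cBasic y γ ⊆ V :=
    (cBasic_subset_of_mem (mem_cBasic_self y β') (le_max_right _ _)).trans hβ'
  set d : CS I := fun α => if α < γ then x α ^^ y α else false
  have hmaps (z : CS I) (hz : z ∈ cBasic y γ) : xorWith d z ∈ cBasic x γ := fun α hα => by
    simp [xorWith, d, hz α hα, hα, Bool.xor_left_comm]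
  have hE0 (z : CS I) : E0 (xorWith d z) z := ⟨γ, fun α hα => by simp [xorWith, d, hα.not_gt]⟩
  have hout : ∀ᶠ z in comeager I (CS I), z ∉ cBasic y γ := by
    filter_upwards [hAV.mem_iff, tendsto_comeager_homeomorph (xorHomeomorph d) hAU.mem_iff]
      with z hzV hzU hz
    exact hzV.2 (hyV hz) (hinv _ _ (hE0 z) (hzU.2 (hxU (hmaps z hz))))
  exact absurd hout (frequently_mem_cBasic hbdd y γ)

theorem not_exists_isCBorel_reduction [Nonempty I] [NoMaxOrder I] [WellFoundedLT I]
    (hbdd : SegmentsBounded I) :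
    ¬ ∃ f : CS I → CS I, (∀ U : Set (CS I), IsOpen U → IsCBorel (f ⁻¹' U)) ∧
      ∀ η ξ : CS I, (E0 η ξ ↔ f η = f ξ) := by
  rintro ⟨f, hf, hred⟩
  have hcoord (α : I) : ∃ b, ∀ᶠ x in comeager I (CS I), f x α = b := by
    have hA := (hf _ (isOpen_setOf_apply α (· = true))).hasBaireProperty
    rcases mem_comeager_or_compl_mem_comeager hbdd hA fun x y hxy hx => by
        rwa [mem_preimage, ← (hred x y).1 hxy] with h | h
    · exact ⟨true, h⟩
    · exact ⟨false, mem_of_superset h fun x hx => by simpa using hx⟩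
  choose b hb using hcoord
  have hfb : ∀ᶠ x in comeager I (CS I), f x = b :=
    (eventually_all_comeager hb).mono fun x hx => funext hx
  have := comeager_neBot hbdd
  obtain ⟨x₀, hx₀⟩ := hfb.exists
  obtain ⟨y, hy, hyx₀⟩ := (hfb.and (eventually_not_E0 x₀)).exists
  exact hyx₀ ((hred y x₀).2 (hy.trans hx₀.symm))

end E0

theorem exists_forall_lt_of_mk_lt {I : Type*} [LinearOrder I] {κ : Cardinal} (hκ : κ.IsRegular)
    (hI : #I = κ) (hseg : ∀ i : I, #(Iio i) < κ) {s : Set I} (hs : #s < κ) :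
    ∃ b, ∀ a ∈ s, a < b := by
  by_contra! h
  have hIic (a : I) : #(Iic a) < κ :=
    (Iio_insert (a := a) ▸ mk_insert_le).trans_lt
      (add_lt_of_lt hκ.aleph0_le (hseg a) (one_lt_aleph0.trans_le hκ.aleph0_le))
  have hcover : (univ : Set I) ⊆ ⋃ a ∈ s, Iic a := fun b _ =>
    let ⟨a, ha, hba⟩ := h b
    mem_biUnion ha hba
  refine (mk_univ.symm.trans_le (mk_le_mk_of_subset hcover)).not_gt ?_
  rw [hI]
  exact (mk_biUnion_le _ s).trans_lt
    (mul_lt_of_lt hκ.aleph0_le hs (iSup_lt_of_lt_cof_ord (by rwa [hκ.cof_ord]) fun a => hIic a))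

theorem stmt11_general (κ : Cardinal) (hreg : κ.IsRegular)
    (I : Type) [LinearOrder I] [WellFoundedLT I] (hI : Cardinal.mk I = κ)
    (hseg : ∀ i : I, Cardinal.mk {j : I // j < i} < κ) :
    ¬ ∃ f : CS I → CS I, (∀ U : Set (CS I), IsOpen U → IsCBorel (f ⁻¹' U)) ∧
      ∀ η ξ : CS I, ((∃ α : I, ∀ β : I, α < β → η β = ξ β) ↔ f η = f ξ) := by
  have hbounded := @exists_forall_lt_of_mk_lt I _ κ hreg hI hseg
  have : Nonempty I := mk_ne_zero_iff.1 (hI ▸ hreg.pos.ne')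
  have : NoMaxOrder I := ⟨fun a =>
    let ⟨b, hb⟩ := hbounded (s := {a}) (by simpa using one_lt_aleph0.trans_le hreg.aleph0_le)
    ⟨b, hb a rfl⟩⟩
  refine not_exists_isCBorel_reduction fun i g => ?_
  obtain ⟨b, hb⟩ := hbounded (mk_range_le.trans_lt (hseg i))
  exact ⟨b, forall_mem_range.2 fun j => (hb _ (mem_range_self j)).le⟩

/-- assume `κ^{<κ} = κ`.  The relation `E₀^{<κ}` of equivalence modulo bounded
sets on `2^κ` is not Borel reducible to the identity: there is no Borel `f : 2^κ → 2^κ` with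
`η E₀ ξ ⟺ f η = f ξ`. -/
theorem stmt11 (κ : Cardinal) (hreg : κ.IsRegular) (hunc : Cardinal.aleph0 < κ)
    (hpow : Cardinal.powerlt κ κ = κ)
    (I : Type) [LinearOrder I] [WellFoundedLT I] (hI : Cardinal.mk I = κ)
    (hseg : ∀ i : I, Cardinal.mk {j : I // j < i} < κ) :
    ¬ ∃ f : CS I → CS I, (∀ U : Set (CS I), IsOpen U → IsCBorel (f ⁻¹' U)) ∧
      ∀ η ξ : CS I, ((∃ α : I, ∀ β : I, α < β → η β = ξ β) ↔ f η = f ξ) :=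
  stmt11_general κ hreg I hI hseg

end GDST
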